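/- arXiv:1406.3517 — 6 statements merged into one kernel-verified Lean document; each statement's English description precedes it below -/
import Mathlib

section
/- Let n be a natural number. The map sending a Brauer n-diagram M to the triple (a, b, π) — where a is the involution of Fin n defined by a x = y if M (inl x) = inl y for some y and a x = x otherwise; b is the involution of Fin n defined by b x = y if M (inr x) = inr y for some y and b x = x otherwise; and π is the map from the fixed-point set of a to the fixed-point set of b sending x to the unique y with M (inl x) = inr y — is a bijection from the set of Brauer n-diagrams onto the set of triples (a, b, π) in which a and b are involutions of Fin n and π is a bijection from the fixed-point set of a onto the fixed-point set of b. Moreover, under this bijection t(M) equals the number of fixed points of a. -/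
open Sum

/-- A Brauer `n`-diagram: a fixed-point-free involution of `Fin n ⊕ Fin n`. -/
def IsBrauer {n : ℕ} (M : Fin n ⊕ Fin n → Fin n ⊕ Fin n) : Prop :=
  M ∘ M = id ∧ ∀ x, M x ≠ x

/-- The top involution `a` of a diagram: `a x = y` if `M (inl x) = inl y` for some `y`,
and `a x = x` otherwise. -/
noncomputable def topInv {n : ℕ} (M : Fin n ⊕ Fin n → Fin n ⊕ Fin n) (x : Fin n) : Fin n :=
  if h : ∃ y, M (inl x) = inl y then h.choose else x

/-- The bottom involution `b` of a diagram: `b x = y` if `M (inr x) = inr y` for some `y`,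
and `b x = x` otherwise. -/
noncomputable def botInv {n : ℕ} (M : Fin n ⊕ Fin n → Fin n ⊕ Fin n) (x : Fin n) : Fin n :=
  if h : ∃ y, M (inr x) = inr y then h.choose else x

/-- The through-strand map `π`: it sends a fixed point `x` of `a` to the unique `y`
with `M (inl x) = inr y` (and is normalized to be the identity elsewhere). -/
def thru {n : ℕ} (M : Fin n ⊕ Fin n → Fin n ⊕ Fin n) (x : Fin n) : Fin n :=
  match M (inl x) with
  | inl _ => x
  | inr y => y

/-- The map sending a Brauer diagram to its triple `(a, b, π)`. -/
noncomputable def brauerTriple {n : ℕ} (M : Fin n ⊕ Fin n → Fin n ⊕ Fin n) :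
    (Fin n → Fin n) × (Fin n → Fin n) × (Fin n → Fin n) :=
  (topInv M, botInv M, thru M)

section Aux
variable {n : ℕ} {M : Fin n ⊕ Fin n → Fin n ⊕ Fin n} {x y : Fin n}

lemma topInv_inl (h : M (inl x) = inl y) : topInv M x = y := by
  have he : ∃ y, M (inl x) = inl y := ⟨y, h⟩
  simp only [topInv, dif_pos he]
  exact inl_injective (he.choose_spec.symm.trans h)

lemma topInv_inr (h : M (inl x) = inr y) : topInv M x = x := by
  have he : ¬ ∃ y, M (inl x) = inl y := by
    rintro ⟨z, hz⟩; rw [h] at hz; exact absurd hz (by simp)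
  simp only [topInv, dif_neg he]

lemma botInv_inr (h : M (inr x) = inr y) : botInv M x = y := by
  have he : ∃ y, M (inr x) = inr y := ⟨y, h⟩
  simp only [botInv, dif_pos he]
  exact inr_injective (he.choose_spec.symm.trans h)

lemma botInv_inl (h : M (inr x) = inl y) : botInv M x = x := by
  have he : ¬ ∃ y, M (inr x) = inr y := by
    rintro ⟨z, hz⟩; rw [h] at hz; exact absurd hz (by simp)
  simp only [botInv, dif_neg he]

lemma thru_inl (h : M (inl x) = inl y) : thru M x = x := by unfold thru; rw [h]

lemma thru_inr (h : M (inl x) = inr y) : thru M x = y := by unfold thru; rw [h]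

/-- Key characterization: `topInv M x = x ↔ (M (inl x)).isRight` for Brauer `M`. -/
lemma topInv_fixed_iff (hM : IsBrauer M) : topInv M x = x ↔ (M (inl x)).isRight := by
  constructor
  · intro h
    cases hc : M (inl x) with
    | inl z =>
      rw [topInv_inl hc] at h
      subst h
      exact absurd hc (hM.2 _)
    | inr z => simp
  · intro h
    cases hc : M (inl x) with
    | inl z => rw [hc] at h; simp at h
    | inr z => exact topInv_inr hc
end Aux

/-- The map `M ↦ (a, b, π)` is a bijection from the set of Brauer `n`-diagrams onto the
set of triples where `a`, `b` are involutions of `Fin n` and `π` is a bijection from the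
fixed-point set of `a` onto the fixed-point set of `b` (normalized to be the identity off
the fixed-point set of `a`).  Moreover `t(M)` equals the number of fixed points of `a`. -/
theorem stmt0 (n : ℕ) :
    Set.BijOn (brauerTriple (n := n)) {M | IsBrauer M}
      {t : (Fin n → Fin n) × (Fin n → Fin n) × (Fin n → Fin n) |
        t.1 ∘ t.1 = id ∧ t.2.1 ∘ t.2.1 = id ∧
        Set.BijOn t.2.2 {x | t.1 x = x} {y | t.2.1 y = y} ∧
        ∀ x, t.1 x ≠ x → t.2.2 x = x} ∧
    ∀ M : Fin n ⊕ Fin n → Fin n ⊕ Fin n, IsBrauer M →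
      (Finset.univ.filter fun x : Fin n => (M (inl x)).isRight).card =
        (Finset.univ.filter fun x : Fin n => topInv M x = x).card := by
  classical
  constructor
  · refine ⟨?_, ?_, ?_⟩
    · -- MapsTo
      intro M hM
      have hM2 : ∀ z, M (M z) = z := fun z => congrFun hM.1 z
      simp only [brauerTriple, Set.mem_setOf_eq]
      refine ⟨?_, ?_, ⟨?_, ?_, ?_⟩, ?_⟩
      · -- topInv involution
        funext x
        cases h : M (inl x) with
        | inl y =>
          have h2 : M (inl y) = inl x := by rw [← h, hM2]
          simp only [Function.comp_apply, id_eq, topInv_inl h, topInv_inl h2]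
        | inr y =>
          simp only [Function.comp_apply, id_eq, topInv_inr h]
      · -- botInv involution
        funext x
        cases h : M (inr x) with
        | inl y =>
          simp only [Function.comp_apply, id_eq, botInv_inl h]
        | inr y =>
          have h2 : M (inr y) = inr x := by rw [← h, hM2]
          simp only [Function.comp_apply, id_eq, botInv_inr h, botInv_inr h2]
      · -- thru MapsTo
        intro x hx
        simp only [brauerTriple, Set.mem_setOf_eq] at hx ⊢
        rcases ((topInv_fixed_iff hM).1 hx) with h
        cases h2 : M (inl x) with
        | inl y => rw [h2] at h; simp at h
        | inr y =>
          rw [thru_inr h2]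
          have h3 : M (inr y) = inl x := by rw [← h2, hM2]
          exact botInv_inl h3
      · -- thru InjOn
        intro x1 hx1 x2 hx2 he
        simp only [brauerTriple, Set.mem_setOf_eq] at hx1 hx2 he
        have h1 := (topInv_fixed_iff hM).1 hx1
        have h2 := (topInv_fixed_iff hM).1 hx2
        cases c1 : M (inl x1) with
        | inl y => rw [c1] at h1; simp at h1
        | inr y1 =>
          cases c2 : M (inl x2) with
          | inl y => rw [c2] at h2; simp at h2
          | inr y2 =>
            rw [thru_inr c1, thru_inr c2] at he
            subst he
            have := (c1.trans c2.symm)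
            have h4 : M (M (inl x1)) = M (M (inl x2)) := by rw [this]
            rw [hM2, hM2] at h4
            exact inl_injective h4
      · -- thru SurjOn
        intro y hy
        simp only [brauerTriple, Set.mem_setOf_eq] at hy
        cases h : M (inr y) with
        | inr z =>
          rw [botInv_inr h] at hy
          subst hy
          exact absurd h (hM.2 _)
        | inl x =>
          have h2 : M (inl x) = inr y := by rw [← h, hM2]
          refine ⟨x, ?_, ?_⟩
          · simp only [brauerTriple, Set.mem_setOf_eq]
            exact topInv_inr h2
          · exact thru_inr h2
      · -- normalization
        intro x hx
        cases h : M (inl x) with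
        | inl y => exact thru_inl h
        | inr y => exact absurd (topInv_inr h) hx
    · -- InjOn
      intro M hM M' hM' heq
      have hM2 : ∀ z, M (M z) = z := fun z => congrFun hM.1 z
      have hM'2 : ∀ z, M' (M' z) = z := fun z => congrFun hM'.1 z
      simp only [brauerTriple, Prod.mk.injEq] at heq
      obtain ⟨h1, h2, h3⟩ := heq
      funext z
      cases z with
      | inl x =>
        cases h : M (inl x) with
        | inl y =>
          have hy : y ≠ x := fun e => hM.2 (inl x) (by rw [h, e])
          have ht : topInv M' x = y := by rw [← congrFun h1 x, topInv_inl h]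
          cases h' : M' (inl x) with
          | inl y' =>
            exact congrArg inl (ht.symm.trans (topInv_inl h'))
          | inr y' => rw [topInv_inr h'] at ht; exact absurd ht.symm hy
        | inr y =>
          have ht : topInv M' x = x := by rw [← congrFun h1 x, topInv_inr h]
          cases h' : M' (inl x) with
          | inl y' =>
            rw [topInv_inl h'] at ht
            subst ht
            exact absurd h' (hM'.2 _)
          | inr y' =>
            have : y = y' := by
              have := congrFun h3 x
              rw [thru_inr h, thru_inr h'] at this
              exact this
            exact congrArg inr this
      | inr x =>
        cases h : M (inr x) with
        | inr y =>
          have hy : y ≠ x := fun e => hM.2 (inr x) (by rw [h, e])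
          have ht : botInv M' x = y := by rw [← congrFun h2 x, botInv_inr h]
          cases h' : M' (inr x) with
          | inr y' =>
            exact congrArg inr (ht.symm.trans (botInv_inr h'))
          | inl y' => rw [botInv_inl h'] at ht; exact absurd ht.symm hy
        | inl y =>
          -- M (inr x) = inl y, so M (inl y) = inr x, so thru M y = x and topInv M y = y
          have hy : M (inl y) = inr x := by rw [← h, hM2]
          have hty : topInv M' y = y := by rw [← congrFun h1 y, topInv_inr hy]
          cases h' : M' (inl y) with
          | inl y' =>
            rw [topInv_inl h'] at hty
            subst hty
            exact absurd h' (hM'.2 _)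
          | inr x' =>
            have : x = x' := by
              have := congrFun h3 y
              rw [thru_inr hy, thru_inr h'] at this
              exact this
            subst this
            rw [← h', hM'2]
    · -- SurjOn
      rintro ⟨a, b, π⟩ ⟨ha, hb, hbij, hπ⟩
      have ha2 : ∀ x, a (a x) = x := fun x => congrFun ha x
      have hb2 : ∀ x, b (b x) = x := fun x => congrFun hb x
      set σ : Fin n → Fin n := fun y => if h : ∃ x, a x = x ∧ π x = y then h.choose else y
        with hσdef
      have hσπ : ∀ x, a x = x → σ (π x) = x := by
        intro x hx
        have he : ∃ x', a x' = x' ∧ π x' = π x := ⟨x, hx, rfl⟩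
        simp only [hσdef, dif_pos he]
        exact hbij.injOn he.choose_spec.1 hx he.choose_spec.2
      have hσ : ∀ y, b y = y → a (σ y) = σ y ∧ π (σ y) = y := by
        intro y hy
        obtain ⟨x, hx, hxy⟩ := hbij.surjOn hy
        have he : ∃ x', a x' = x' ∧ π x' = y := ⟨x, hx, hxy⟩
        simp only [hσdef, dif_pos he]
        exact he.choose_spec
      set M : Fin n ⊕ Fin n → Fin n ⊕ Fin n := fun z =>
        match z with
        | inl x => if a x = x then inr (π x) else inl (a x)
        | inr y => if b y = y then inl (σ y) else inr (b y)
        with hMdef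
      have hMl : ∀ x, M (inl x) = if a x = x then inr (π x) else inl (a x) := fun _ => rfl
      have hMr : ∀ y, M (inr y) = if b y = y then inl (σ y) else inr (b y) := fun _ => rfl
      have hbrauer : IsBrauer M := by
        constructor
        · funext z
          cases z with
          | inl x =>
            simp only [Function.comp_apply, id_eq, hMl x]
            by_cases hx : a x = x
            · rw [if_pos hx, hMr (π x)]
              have hbπ : b (π x) = π x := hbij.mapsTo hx
              rw [if_pos hbπ, hσπ x hx]
            · rw [if_neg hx, hMl (a x)]
              have : a (a x) ≠ a x := fun e => hx (((ha2 x).symm.trans e).symm)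
              rw [if_neg this, ha2]
          | inr y =>
            simp only [Function.comp_apply, id_eq, hMr y]
            by_cases hy : b y = y
            · rw [if_pos hy, hMl (σ y)]
              obtain ⟨hσ1, hσ2⟩ := hσ y hy
              rw [if_pos hσ1, hσ2]
            · rw [if_neg hy, hMr (b y)]
              have : b (b y) ≠ b y := fun e => hy (((hb2 y).symm.trans e).symm)
              rw [if_neg this, hb2]
        · intro z
          cases z with
          | inl x =>
            rw [hMl x]
            by_cases hx : a x = x
            · rw [if_pos hx]; simp
            · rw [if_neg hx]; simpa using hx
          | inr y =>
            rw [hMr y]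
            by_cases hy : b y = y
            · rw [if_pos hy]; simp
            · rw [if_neg hy]; simpa using hy
      refine ⟨M, hbrauer, ?_⟩
      simp only [brauerTriple, Prod.mk.injEq]
      refine ⟨?_, ?_, ?_⟩
      · funext x
        by_cases hx : a x = x
        · have h : M (inl x) = inr (π x) := by rw [hMl x, if_pos hx]
          rw [topInv_inr h, hx]
        · have h : M (inl x) = inl (a x) := by rw [hMl x, if_neg hx]
          rw [topInv_inl h]
      · funext y
        by_cases hy : b y = y
        · have h : M (inr y) = inl (σ y) := by rw [hMr y, if_pos hy]
          rw [botInv_inl h, hy]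
        · have h : M (inr y) = inr (b y) := by rw [hMr y, if_neg hy]
          rw [botInv_inr h]
      · funext x
        by_cases hx : a x = x
        · have h : M (inl x) = inr (π x) := by rw [hMl x, if_pos hx]
          rw [thru_inr h]
        · have h : M (inl x) = inl (a x) := by rw [hMl x, if_neg hx]
          rw [thru_inl h]
          exact (hπ x hx).symm
  · -- cardinality
    intro M hM
    congr 1
    ext x
    simp only [Finset.mem_filter, Finset.mem_univ, true_and]
    exact (topInv_fixed_iff hM).symm
end

section
/- Let n be a natural number. The map sending a colored Brauer n-diagram (M, ℓ) to the tuple (a, ℓa, b, ℓb, π, w) — where a is the involution of Fin n defined by a x = y if M (inl x) = inl y for some y and a x = x otherwise; b is the involution of Fin n defined by b x = y if M (inr x) = inr y for some y and b x = x otherwise; ℓa : Fin n → ℤ is defined by ℓa x = ℓ (inl x) if M (inl x) is a top vertex and ℓa x = 0 otherwise; ℓb : Fin n → ℤ is defined by ℓb x = ℓ (inr x) if M (inr x) is a bottom vertex and ℓb x = 0 otherwise; π is the map from the fixed-point set of a to the fixed-point set of b sending x to the unique y with M (inl x) = inr y; and w maps each fixed point x of a to ℓ (inl x) — is a bijection from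 the set of colored Brauer n-diagrams onto the set of tuples (a, ℓa, b, ℓb, π, w) in which a and b are involutions of Fin n, ℓa : Fin n → ℤ satisfies ℓa (a x) = -ℓa x for all x, ℓb : Fin n → ℤ satisfies ℓb (b x) = -ℓb x for all x, π is a bijection from the fixed-point set of a onto the fixed-point set of b, and w is a function from the fixed-point set of a to ℤ. -/
open Sum

/-- A colored Brauer `n`-diagram: a Brauer diagram together with a labeling
`ℓ : Fin n ⊕ Fin n → ℤ` satisfying `ℓ (M x) = -ℓ x` for all `x`. -/
def IsColoredBrauer {n : ℕ} (M : Fin n ⊕ Fin n → Fin n ⊕ Fin n)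
    (ℓ : Fin n ⊕ Fin n → ℤ) : Prop :=
  IsBrauer M ∧ ∀ x, ℓ (M x) = -ℓ x

/-- `ℓa x = ℓ (inl x)` if `M (inl x)` is a top vertex, and `ℓa x = 0` otherwise. -/
def topLab {n : ℕ} (M : Fin n ⊕ Fin n → Fin n ⊕ Fin n) (ℓ : Fin n ⊕ Fin n → ℤ)
    (x : Fin n) : ℤ :=
  if (M (inl x)).isLeft then ℓ (inl x) else 0

/-- `ℓb x = ℓ (inr x)` if `M (inr x)` is a bottom vertex, and `ℓb x = 0` otherwise. -/
def botLab {n : ℕ} (M : Fin n ⊕ Fin n → Fin n ⊕ Fin n) (ℓ : Fin n ⊕ Fin n → ℤ)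
    (x : Fin n) : ℤ :=
  if (M (inr x)).isRight then ℓ (inr x) else 0

/-- `w x = ℓ (inl x)` at each fixed point `x` of `a` (i.e. when `M (inl x)` is a bottom
vertex), normalized to `0` elsewhere. -/
def thruLab {n : ℕ} (M : Fin n ⊕ Fin n → Fin n ⊕ Fin n) (ℓ : Fin n ⊕ Fin n → ℤ)
    (x : Fin n) : ℤ :=
  if (M (inl x)).isRight then ℓ (inl x) else 0

/-- The map sending a colored Brauer diagram `(M, ℓ)` to its tuple
`(a, ℓa, b, ℓb, π, w)`. -/
noncomputable def coloredTuple {n : ℕ}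
    (p : (Fin n ⊕ Fin n → Fin n ⊕ Fin n) × (Fin n ⊕ Fin n → ℤ)) :
    (Fin n → Fin n) × (Fin n → ℤ) × (Fin n → Fin n) × (Fin n → ℤ) ×
      (Fin n → Fin n) × (Fin n → ℤ) :=
  (topInv p.1, topLab p.1 p.2, botInv p.1, botLab p.1 p.2, thru p.1, thruLab p.1 p.2)

section Aux

variable {n : ℕ}

lemma topInv_of_inl {M : Fin n ⊕ Fin n → Fin n ⊕ Fin n} {x y : Fin n}
    (h : M (inl x) = inl y) : topInv M x = y := by
  unfold topInv
  split
  · next hh => exact inl.inj (hh.choose_spec.symm.trans h)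
  · next hh => exact absurd ⟨y, h⟩ hh

lemma topInv_of_inr {M : Fin n ⊕ Fin n → Fin n ⊕ Fin n} {x y : Fin n}
    (h : M (inl x) = inr y) : topInv M x = x := by
  unfold topInv
  split
  · next hh =>
    exfalso
    obtain ⟨z, hz⟩ := hh
    rw [h] at hz
    exact absurd hz (by simp)
  · rfl

lemma botInv_of_inr {M : Fin n ⊕ Fin n → Fin n ⊕ Fin n} {x y : Fin n}
    (h : M (inr x) = inr y) : botInv M x = y := by
  unfold botInv
  split
  · next hh => exact inr.inj (hh.choose_spec.symm.trans h)
  · next hh => exact absurd ⟨y, h⟩ hh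

lemma botInv_of_inl {M : Fin n ⊕ Fin n → Fin n ⊕ Fin n} {x y : Fin n}
    (h : M (inr x) = inl y) : botInv M x = x := by
  unfold botInv
  split
  · next hh =>
    exfalso
    obtain ⟨z, hz⟩ := hh
    rw [h] at hz
    exact absurd hz (by simp)
  · rfl

lemma thru_of_inl {M : Fin n ⊕ Fin n → Fin n ⊕ Fin n} {x y : Fin n}
    (h : M (inl x) = inl y) : thru M x = x := by
  simp [thru, h]

lemma thru_of_inr {M : Fin n ⊕ Fin n → Fin n ⊕ Fin n} {x y : Fin n}
    (h : M (inl x) = inr y) : thru M x = y := by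
  simp [thru, h]

lemma topInv_fix {M : Fin n ⊕ Fin n → Fin n ⊕ Fin n} (hne : ∀ x, M x ≠ x) (x : Fin n) :
    topInv M x = x ↔ ∃ y, M (inl x) = inr y := by
  constructor
  · intro hx
    cases h : M (inl x) with
    | inl y =>
      rw [topInv_of_inl h] at hx
      rw [hx] at h
      exact absurd h (hne _)
    | inr y => exact ⟨y, rfl⟩
  · rintro ⟨y, h⟩; exact topInv_of_inr h

lemma botInv_fix {M : Fin n ⊕ Fin n → Fin n ⊕ Fin n} (hne : ∀ x, M x ≠ x) (x : Fin n) :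
    botInv M x = x ↔ ∃ y, M (inr x) = inl y := by
  constructor
  · intro hx
    cases h : M (inr x) with
    | inr y =>
      rw [botInv_of_inr h] at hx
      rw [hx] at h
      exact absurd h (hne _)
    | inl y => exact ⟨y, rfl⟩
  · rintro ⟨y, h⟩; exact botInv_of_inl h

/-- Reconstructed matching from tuple data. -/
def recM (a b π σ : Fin n → Fin n) : Fin n ⊕ Fin n → Fin n ⊕ Fin n
  | inl x => if a x = x then inr (π x) else inl (a x)
  | inr y => if b y = y then inl (σ y) else inr (b y)

/-- Reconstructed labeling from tuple data. -/
def recL (a b : Fin n → Fin n) (ℓa ℓb w : Fin n → ℤ) (σ : Fin n → Fin n) :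
    Fin n ⊕ Fin n → ℤ
  | inl x => if a x = x then w x else ℓa x
  | inr y => if b y = y then -(w (σ y)) else ℓb y

/-- A choice-based partial inverse of `π` on the fixed points of `a`. -/
noncomputable def invσ (a π : Fin n → Fin n) (y : Fin n) : Fin n :=
  if h : ∃ x, a x = x ∧ π x = y then h.choose else y

lemma invσ_spec {a π : Fin n → Fin n} {y : Fin n} (h : ∃ x, a x = x ∧ π x = y) :
    a (invσ a π y) = invσ a π y ∧ π (invσ a π y) = y := by
  unfold invσ
  split
  · next hh => exact hh.choose_spec
  · next hh => exact absurd h hh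

end Aux

/-- The map `(M, ℓ) ↦ (a, ℓa, b, ℓb, π, w)` is a bijection from the set of colored Brauer
`n`-diagrams onto the set of tuples where `a`, `b` are involutions of `Fin n`,
`ℓa (a x) = -ℓa x` and `ℓb (b x) = -ℓb x` for all `x`, `π` is a bijection from the
fixed-point set of `a` onto the fixed-point set of `b`, and `w` is an integer-valued
function on the fixed-point set of `a` (with `π` and `w` normalized to the identity
resp. `0` off the fixed-point set of `a`). -/

theorem stmt1 (n : ℕ) :
    Set.BijOn (coloredTuple (n := n))
      {p | IsColoredBrauer p.1 p.2}
      {t : (Fin n → Fin n) × (Fin n → ℤ) × (Fin n → Fin n) × (Fin n → ℤ) ×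
          (Fin n → Fin n) × (Fin n → ℤ) |
        t.1 ∘ t.1 = id ∧
        t.2.2.1 ∘ t.2.2.1 = id ∧
        (∀ x, t.2.1 (t.1 x) = -t.2.1 x) ∧
        (∀ x, t.2.2.2.1 (t.2.2.1 x) = -t.2.2.2.1 x) ∧
        Set.BijOn t.2.2.2.2.1 {x | t.1 x = x} {y | t.2.2.1 y = y} ∧
        (∀ x, t.1 x ≠ x → t.2.2.2.2.1 x = x) ∧
        (∀ x, t.1 x ≠ x → t.2.2.2.2.2 x = 0)} := by
  classical
  refine ⟨?_, ?_, ?_⟩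
  · -- MapsTo
    rintro ⟨M, ℓ⟩ ⟨⟨hinv, hne⟩, hℓ⟩
    replace hinv : M ∘ M = id := hinv
    replace hne : ∀ x, M x ≠ x := hne
    replace hℓ : ∀ x, ℓ (M x) = -ℓ x := hℓ
    have hMM : ∀ x, M (M x) = x := fun x => congrFun hinv x
    simp only [coloredTuple, Set.mem_setOf_eq]
    refine ⟨?_, ?_, ?_, ?_, ⟨?_, ?_, ?_⟩, ?_, ?_⟩
    · funext x
      simp only [Function.comp_apply, id_eq]
      cases h : M (inl x) with
      | inl y =>
        have h2 : M (inl y) = inl x := by rw [← h, hMM]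
        rw [topInv_of_inl h, topInv_of_inl h2]
      | inr y => rw [topInv_of_inr h, topInv_of_inr h]
    · funext x
      simp only [Function.comp_apply, id_eq]
      cases h : M (inr x) with
      | inr y =>
        have h2 : M (inr y) = inr x := by rw [← h, hMM]
        rw [botInv_of_inr h, botInv_of_inr h2]
      | inl y => rw [botInv_of_inl h, botInv_of_inl h]
    · intro x
      cases h : M (inl x) with
      | inl y =>
        have h2 : M (inl y) = inl x := by rw [← h, hMM]
        have h3 := hℓ (inl x); rw [h] at h3
        rw [topInv_of_inl h, topLab, topLab, h, h2]
        simpa using h3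
      | inr y =>
        rw [topInv_of_inr h, topLab, h]
        simp
    · intro x
      cases h : M (inr x) with
      | inr y =>
        have h2 : M (inr y) = inr x := by rw [← h, hMM]
        have h3 := hℓ (inr x); rw [h] at h3
        rw [botInv_of_inr h, botLab, botLab, h, h2]
        simpa using h3
      | inl y =>
        rw [botInv_of_inl h, botLab, h]
        simp
    · -- MapsTo of thru
      intro x hx
      obtain ⟨y, h⟩ := (topInv_fix hne x).1 hx
      have h2 : M (inr y) = inl x := by rw [← h, hMM]
      rw [Set.mem_setOf_eq, thru_of_inr h]
      exact (botInv_fix hne y).2 ⟨x, h2⟩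
    · -- InjOn of thru
      intro x1 h1 x2 h2 he
      obtain ⟨y1, hy1⟩ := (topInv_fix hne x1).1 h1
      obtain ⟨y2, hy2⟩ := (topInv_fix hne x2).1 h2
      rw [thru_of_inr hy1, thru_of_inr hy2] at he
      have h4 : M (inl x1) = M (inl x2) := by rw [hy1, hy2, he]
      have h5 := congrArg M h4
      rw [hMM, hMM] at h5
      exact inl.inj h5
    · -- SurjOn of thru
      intro y hy
      obtain ⟨x, h⟩ := (botInv_fix hne y).1 hy
      have h2 : M (inl x) = inr y := by rw [← h, hMM]
      exact ⟨x, (topInv_fix hne x).2 ⟨y, h2⟩, thru_of_inr h2⟩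
    · intro x hx
      cases h : M (inl x) with
      | inl y => exact thru_of_inl h
      | inr y => exact absurd (topInv_of_inr h) hx
    · intro x hx
      cases h : M (inl x) with
      | inl y => rw [thruLab, h]; simp
      | inr y => exact absurd (topInv_of_inr h) hx
  · -- InjOn
    rintro ⟨M, ℓ⟩ ⟨⟨hinv, hne⟩, hℓ⟩ ⟨M', ℓ'⟩ ⟨⟨hinv', hne'⟩, hℓ'⟩ he
    replace hinv : M ∘ M = id := hinv
    replace hne : ∀ x, M x ≠ x := hne
    replace hℓ : ∀ x, ℓ (M x) = -ℓ x := hℓ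
    replace hinv' : M' ∘ M' = id := hinv'
    replace hne' : ∀ x, M' x ≠ x := hne'
    replace hℓ' : ∀ x, ℓ' (M' x) = -ℓ' x := hℓ'
    have hMM : ∀ x, M (M x) = x := fun x => congrFun hinv x
    have hMM' : ∀ x, M' (M' x) = x := fun x => congrFun hinv' x
    simp only [coloredTuple, Prod.mk.injEq] at he
    obtain ⟨ha, hla, hb, hlb, hπ, hw⟩ := he
    have hM : M = M' := by
      funext z
      cases z with
      | inl x =>
        cases h : M (inl x) with
        | inl y =>
          have hyx : y ≠ x := fun hc => hne (inl x) (by rw [h, hc])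
          cases h' : M' (inl x) with
          | inl y' =>
            have e1 : y = y' := by
              rw [← topInv_of_inl h, ← topInv_of_inl h', ha]
            rw [e1]
          | inr y' =>
            exfalso
            have e1 := topInv_of_inl h
            have e2 := topInv_of_inr h'
            rw [ha, e2] at e1
            exact hyx e1.symm
        | inr y =>
          cases h' : M' (inl x) with
          | inl y' =>
            exfalso
            have hyx : y' ≠ x := fun hc => hne' (inl x) (by rw [h', hc])
            have e1 := topInv_of_inl h'
            have e2 := topInv_of_inr h
            rw [← ha, e2] at e1
            exact hyx e1.symm
          | inr y' =>
            have e1 : y = y' := by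
              rw [← thru_of_inr h, ← thru_of_inr h', hπ]
            rw [e1]
      | inr x =>
        cases h : M (inr x) with
        | inr y =>
          have hyx : y ≠ x := fun hc => hne (inr x) (by rw [h, hc])
          cases h' : M' (inr x) with
          | inr y' =>
            have e1 : y = y' := by
              rw [← botInv_of_inr h, ← botInv_of_inr h', hb]
            rw [e1]
          | inl y' =>
            exfalso
            have e1 := botInv_of_inr h
            have e2 := botInv_of_inl h'
            rw [hb, e2] at e1
            exact hyx e1.symm
        | inl y =>
          cases h' : M' (inr x) with
          | inr y' =>
            exfalso
            have hyx : y' ≠ x := fun hc => hne' (inr x) (by rw [h', hc])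
            have e1 := botInv_of_inr h'
            have e2 := botInv_of_inl h
            rw [← hb, e2] at e1
            exact hyx e1.symm
          | inl y' =>
            have h2 : M (inl y) = inr x := by rw [← h, hMM]
            have h2' : M' (inl y') = inr x := by rw [← h', hMM']
            have hfix' : topInv M' y' = y' := topInv_of_inr h2'
            have hfix : topInv M y' = y' := by rw [ha]; exact hfix'
            obtain ⟨z, hz⟩ := (topInv_fix hne y').1 hfix
            have e1 : thru M y' = z := thru_of_inr hz
            have e2 : thru M' y' = x := thru_of_inr h2'
            rw [hπ, e2] at e1
            rw [← e1] at hz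
            have h4 : M (inl y') = M (inl y) := by rw [hz, h2]
            have h5 := congrArg M h4
            rw [hMM, hMM] at h5
            rw [inl.inj h5]
    subst hM
    have hL : ℓ = ℓ' := by
      funext z
      cases z with
      | inl x =>
        cases h : M (inl x) with
        | inl y =>
          have e1 : topLab M ℓ x = ℓ (inl x) := by rw [topLab, h]; simp
          have e2 : topLab M ℓ' x = ℓ' (inl x) := by rw [topLab, h]; simp
          rw [← e1, ← e2, hla]
        | inr y =>
          have e1 : thruLab M ℓ x = ℓ (inl x) := by rw [thruLab, h]; simp
          have e2 : thruLab M ℓ' x = ℓ' (inl x) := by rw [thruLab, h]; simp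
          rw [← e1, ← e2, hw]
      | inr x =>
        cases h : M (inr x) with
        | inr y =>
          have e1 : botLab M ℓ x = ℓ (inr x) := by rw [botLab, h]; simp
          have e2 : botLab M ℓ' x = ℓ' (inr x) := by rw [botLab, h]; simp
          rw [← e1, ← e2, hlb]
        | inl y =>
          have h2 : M (inl y) = inr x := by rw [← h, hMM]
          have e1 : ℓ (inr x) = -ℓ (inl y) := by rw [← h2]; exact hℓ (inl y)
          have e1' : ℓ' (inr x) = -ℓ' (inl y) := by rw [← h2]; exact hℓ' (inl y)
          have e2 : thruLab M ℓ y = ℓ (inl y) := by rw [thruLab, h2]; simp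
          have e2' : thruLab M ℓ' y = ℓ' (inl y) := by rw [thruLab, h2]; simp
          rw [e1, e1', ← e2, ← e2', hw]
    rw [hL]
  · -- SurjOn
    rintro ⟨a, ℓa, b, ℓb, π, w⟩ ⟨ha, hb, hla, hlb, hπ, hπid, hwid⟩
    replace ha : a ∘ a = id := ha
    replace hb : b ∘ b = id := hb
    replace hla : ∀ x, ℓa (a x) = -ℓa x := hla
    replace hlb : ∀ x, ℓb (b x) = -ℓb x := hlb
    replace hπ : Set.BijOn π {x | a x = x} {y | b y = y} := hπ
    replace hπid : ∀ x, a x ≠ x → π x = x := hπid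
    replace hwid : ∀ x, a x ≠ x → w x = 0 := hwid
    have haa : ∀ x, a (a x) = x := fun x => congrFun ha x
    have hbb : ∀ x, b (b x) = x := fun x => congrFun hb x
    set σ := invσ a π with hσdef
    have hσS : ∀ y : Fin n, b y = y → a (σ y) = σ y := by
      intro y hy
      obtain ⟨x, hxS, hxy⟩ := hπ.2.2 hy
      exact (invσ_spec ⟨x, hxS, hxy⟩).1
    have hπσ : ∀ y : Fin n, b y = y → π (σ y) = y := by
      intro y hy
      obtain ⟨x, hxS, hxy⟩ := hπ.2.2 hy
      exact (invσ_spec ⟨x, hxS, hxy⟩).2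
    have hσπ : ∀ x : Fin n, a x = x → σ (π x) = x := by
      intro x hx
      have h1 : π (σ (π x)) = π x := (invσ_spec ⟨x, hx, rfl⟩).2
      have h2 : a (σ (π x)) = σ (π x) := (invσ_spec ⟨x, hx, rfl⟩).1
      exact hπ.2.1 h2 hx h1
    have hπT : ∀ x : Fin n, a x = x → b (π x) = π x := fun x hx => hπ.1 hx
    have hla0 : ∀ x : Fin n, a x = x → ℓa x = 0 := by
      intro x hx
      have h1 := hla x
      rw [hx] at h1
      omega
    have hlb0 : ∀ y : Fin n, b y = y → ℓb y = 0 := by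
      intro y hy
      have h1 := hlb y
      rw [hy] at h1
      omega
    set M : Fin n ⊕ Fin n → Fin n ⊕ Fin n := recM a b π σ with hMdef
    set ℓ : Fin n ⊕ Fin n → ℤ := recL a b ℓa ℓb w σ with hℓdef
    have hMl : ∀ x : Fin n, a x = x → M (inl x) = inr (π x) := by
      intro x hx; simp [hMdef, recM, hx]
    have hMl' : ∀ x : Fin n, a x ≠ x → M (inl x) = inl (a x) := by
      intro x hx; simp [hMdef, recM, hx]
    have hMr : ∀ y : Fin n, b y = y → M (inr y) = inl (σ y) := by
      intro y hy; simp [hMdef, recM, hy]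
    have hMr' : ∀ y : Fin n, b y ≠ y → M (inr y) = inr (b y) := by
      intro y hy; simp [hMdef, recM, hy]
    have hLl : ∀ x : Fin n, a x = x → ℓ (inl x) = w x := by
      intro x hx; simp [hℓdef, recL, hx]
    have hLl' : ∀ x : Fin n, a x ≠ x → ℓ (inl x) = ℓa x := by
      intro x hx; simp [hℓdef, recL, hx]
    have hLr : ∀ y : Fin n, b y = y → ℓ (inr y) = -(w (σ y)) := by
      intro y hy; simp [hℓdef, recL, hy]
    have hLr' : ∀ y : Fin n, b y ≠ y → ℓ (inr y) = ℓb y := by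
      intro y hy; simp [hℓdef, recL, hy]
    refine ⟨(M, ℓ), ?_, ?_⟩
    · show IsColoredBrauer M ℓ
      refine ⟨⟨?_, ?_⟩, ?_⟩
      · -- M ∘ M = id
        funext z
        simp only [Function.comp_apply, id_eq]
        cases z with
        | inl x =>
          by_cases hx : a x = x
          · rw [hMl x hx, hMr _ (hπT x hx), hσπ x hx]
          · have h1 : a (a x) ≠ a x := by
              rw [haa]; exact fun hc => hx hc.symm
            rw [hMl' x hx, hMl' _ h1, haa]
        | inr y =>
          by_cases hy : b y = y
          · rw [hMr y hy, hMl _ (hσS y hy), hπσ y hy]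
          · have h1 : b (b y) ≠ b y := by
              rw [hbb]; exact fun hc => hy hc.symm
            rw [hMr' y hy, hMr' _ h1, hbb]
      · -- fixed-point-free
        intro z
        cases z with
        | inl x =>
          by_cases hx : a x = x
          · rw [hMl x hx]; simp
          · rw [hMl' x hx]; simpa using hx
        | inr y =>
          by_cases hy : b y = y
          · rw [hMr y hy]; simp
          · rw [hMr' y hy]; simpa using hy
      · -- labeling condition
        intro z
        cases z with
        | inl x =>
          by_cases hx : a x = x
          · rw [hMl x hx, hLr _ (hπT x hx), hσπ x hx, hLl x hx]
          · have h1 : a (a x) ≠ a x := by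
              rw [haa]; exact fun hc => hx hc.symm
            rw [hMl' x hx, hLl' _ h1, hLl' x hx, hla]
        | inr y =>
          by_cases hy : b y = y
          · rw [hMr y hy, hLl _ (hσS y hy), hLr y hy, neg_neg]
          · have h1 : b (b y) ≠ b y := by
              rw [hbb]; exact fun hc => hy hc.symm
            rw [hMr' y hy, hLr' _ h1, hLr' y hy, hlb]
    · -- coloredTuple (M, ℓ) = tuple
      show (topInv M, topLab M ℓ, botInv M, botLab M ℓ, thru M, thruLab M ℓ)
        = (a, ℓa, b, ℓb, π, w)
      simp only [Prod.mk.injEq]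
      refine ⟨?_, ?_, ?_, ?_, ?_, ?_⟩
      · funext x
        by_cases hx : a x = x
        · rw [topInv_of_inr (hMl x hx), hx]
        · rw [topInv_of_inl (hMl' x hx)]
      · funext x
        by_cases hx : a x = x
        · rw [topLab, hMl x hx]
          simp [hla0 x hx]
        · rw [topLab, hMl' x hx]
          simp [hLl' x hx]
      · funext y
        by_cases hy : b y = y
        · rw [botInv_of_inl (hMr y hy), hy]
        · rw [botInv_of_inr (hMr' y hy)]
      · funext y
        by_cases hy : b y = y
        · rw [botLab, hMr y hy]
          simp [hlb0 y hy]
        · rw [botLab, hMr' y hy]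
          simp [hLr' y hy]
      · funext x
        by_cases hx : a x = x
        · rw [thru_of_inr (hMl x hx)]
        · rw [thru_of_inl (hMl' x hx), hπid x hx]
      · funext x
        by_cases hx : a x = x
        · rw [thruLab, hMl x hx]
          simp [hLl x hx]
        · rw [thruLab, hMl' x hx]
          simp [hwid x hx]
end

section
/- For every vertex x of A ⊕ C (embedded into A ⊕ B ⊕ C) there exists exactly one vertex y of A ⊕ C with y ≠ x such that x and y lie in the same connected component of G. Consequently, there is a unique fixed-point-free involution f * g of A ⊕ C such that for every x : A ⊕ C, the vertices x and (f * g) x lie in the same connected component of G. -/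
open Sum

variable {A B C : Type*}

/-- The natural embedding of `A ⊕ B` into `A ⊕ B ⊕ C`. -/
def embAB : A ⊕ B → A ⊕ B ⊕ C
  | inl a => inl a
  | inr b => inr (inl b)

/-- The natural embedding of `B ⊕ C` into `A ⊕ B ⊕ C`. -/
def embBC : B ⊕ C → A ⊕ B ⊕ C
  | inl b => inr (inl b)
  | inr c => inr (inr c)

/-- The natural embedding of `A ⊕ C` into `A ⊕ B ⊕ C`. -/
def embAC : A ⊕ C → A ⊕ B ⊕ C
  | inl a => inl a
  | inr c => inr (inr c)

/-- The simple graph on `A ⊕ B ⊕ C` whose edges join (the images of) `x` and `f x`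
for each `x : A ⊕ B`, and (the images of) `y` and `g y` for each `y : B ⊕ C`. -/
def matchGraph (f : A ⊕ B → A ⊕ B) (g : B ⊕ C → B ⊕ C) :
    SimpleGraph (A ⊕ B ⊕ C) :=
  SimpleGraph.fromRel fun u v =>
    (∃ x : A ⊕ B, u = embAB x ∧ v = embAB (f x)) ∨
    (∃ y : B ⊕ C, u = embBC y ∧ v = embBC (g y))

/-- The doubled vertex set. -/
abbrev DD (A B C : Type*) := (A ⊕ B) ⊕ (B ⊕ C)

def tauF : DD A B C → DD A B C
  | inl (inl a) => inl (inl a)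
  | inl (inr b) => inr (inl b)
  | inr (inl b) => inl (inr b)
  | inr (inr c) => inr (inr c)

lemma tauF_invol (d : DD A B C) : tauF (tauF d) = d := by
  rcases d with (a | b) | (b | c) <;> rfl

def prF : DD A B C → A ⊕ B ⊕ C
  | inl (inl a) => inl a
  | inl (inr b) => inr (inl b)
  | inr (inl b) => inr (inl b)
  | inr (inr c) => inr (inr c)

def iotaF : A ⊕ C → DD A B C
  | inl a => inl (inl a)
  | inr c => inr (inr c)

lemma prF_inl (u : A ⊕ B) : prF (inl u : DD A B C) = embAB u := by
  cases u <;> rfl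

lemma prF_inr (v : B ⊕ C) : prF (inr v : DD A B C) = embBC v := by
  cases v <;> rfl

lemma prF_tauF (d : DD A B C) : prF (tauF d) = prF d := by
  rcases d with (a | b) | (b | c) <;> rfl

lemma prF_eq {d e : DD A B C} (h : prF d = prF e) : d = e ∨ d = tauF e := by
  rcases d with (a | b) | (b | c) <;> rcases e with (a' | b') | (b' | c') <;>
    simp_all [prF, tauF]

lemma prF_iotaF (x : A ⊕ C) : prF (iotaF x : DD A B C) = embAC x := by
  cases x <;> rfl

lemma tauF_iotaF (x : A ⊕ C) : tauF (iotaF x : DD A B C) = iotaF x := by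
  cases x <;> rfl

lemma iotaF_inj : Function.Injective (iotaF : A ⊕ C → DD A B C) := by
  intro x y h; cases x <;> cases y <;> simp_all [iotaF]

lemma prF_eq_embAC {d : DD A B C} {x : A ⊕ C} (h : prF d = embAC x) :
    d = iotaF x := by
  rcases (prF_eq (h.trans (prF_iotaF x).symm)) with h' | h'
  · exact h'
  · rw [h', tauF_iotaF]

lemma tauF_fixed {d : DD A B C} (h : tauF d = d) : ∃ y : A ⊕ C, d = iotaF y := by
  rcases d with (a | b) | (b | c)
  · exact ⟨inl a, rfl⟩
  · simp [tauF] at h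
  · simp [tauF] at h
  · exact ⟨inr c, rfl⟩

section Chase

variable (f : A ⊕ B → A ⊕ B) (g : B ⊕ C → B ⊕ C)

/-- One step of the chase. -/
def stepF : DD A B C → DD A B C := fun d => Sum.map f g (tauF d)

variable {f g} (hf : f ∘ f = id) (hf' : ∀ x, f x ≠ x)
  (hg : g ∘ g = id) (hg' : ∀ y, g y ≠ y)

include hf hg

lemma sigma_invol (d : DD A B C) : Sum.map f g (Sum.map f g d) = d := by
  rcases d with u | v
  · simpa using congrFun hf u
  · simpa using congrFun hg v

lemma stepF_sigma (d : DD A B C) :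
    stepF f g (Sum.map f g (stepF f g d)) = Sum.map f g d := by
  unfold stepF
  rw [sigma_invol hf hg, tauF_invol]

lemma stepF_tauF (d : DD A B C) :
    stepF f g (tauF (stepF f g d)) = tauF d := by
  unfold stepF
  rw [tauF_invol, sigma_invol hf hg]

lemma stepF_iter_sigma (k : ℕ) (d : DD A B C) :
    (stepF f g)^[k] (Sum.map f g ((stepF f g)^[k] d)) = Sum.map f g d := by
  induction k generalizing d with
  | zero => rfl
  | succ k ih =>
    rw [Function.iterate_succ_apply, Function.iterate_succ_apply',
      stepF_sigma hf hg, ih]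

lemma stepF_iter_tauF (k : ℕ) (d : DD A B C) :
    (stepF f g)^[k] (tauF ((stepF f g)^[k] d)) = tauF d := by
  induction k generalizing d with
  | zero => rfl
  | succ k ih =>
    rw [Function.iterate_succ_apply, Function.iterate_succ_apply',
      stepF_tauF hf hg, ih]

lemma sigma_inj : Function.Injective (Sum.map f g : DD A B C → DD A B C) := by
  intro d e h
  have := congrArg (Sum.map f g) h
  rwa [sigma_invol hf hg, sigma_invol hf hg] at this

omit hf hg in
lemma tauF_inj : Function.Injective (tauF : DD A B C → DD A B C) := by
  intro d e h
  have := congrArg tauF h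
  rwa [tauF_invol, tauF_invol] at this

lemma stepF_inj : Function.Injective (stepF f g : DD A B C → DD A B C) :=
  fun d e h => tauF_inj ((sigma_inj hf hg) h)

end Chase

section Graph

variable {f : A ⊕ B → A ⊕ B} {g : B ⊕ C → B ⊕ C}

lemma embAB_inj : Function.Injective (embAB : A ⊕ B → A ⊕ B ⊕ C) := by
  intro u v h; cases u <;> cases v <;> simp_all [embAB]

lemma embBC_inj : Function.Injective (embBC : B ⊕ C → A ⊕ B ⊕ C) := by
  intro u v h; cases u <;> cases v <;> simp_all [embBC]

lemma embAC_inj : Function.Injective (embAC : A ⊕ C → A ⊕ B ⊕ C) := by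
  intro u v h; cases u <;> cases v <;> simp_all [embAC]

/-- The base (unsymmetrized) relation of `matchGraph`. -/
def baseRel (f : A ⊕ B → A ⊕ B) (g : B ⊕ C → B ⊕ C) (u v : A ⊕ B ⊕ C) : Prop :=
  (∃ x : A ⊕ B, u = embAB x ∧ v = embAB (f x)) ∨
    (∃ y : B ⊕ C, u = embBC y ∧ v = embBC (g y))

lemma matchGraph_adj {u v : A ⊕ B ⊕ C} :
    (matchGraph f g).Adj u v ↔ u ≠ v ∧ (baseRel f g u v ∨ baseRel f g v u) := by
  rw [matchGraph, SimpleGraph.fromRel_adj]; rfl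

lemma baseRel_symm (hf : f ∘ f = id) (hg : g ∘ g = id) {u v : A ⊕ B ⊕ C}
    (h : baseRel f g u v) : baseRel f g v u := by
  rcases h with ⟨x, hu, hv⟩ | ⟨y, hu, hv⟩
  · exact Or.inl ⟨f x, hv, by
      have hx : f (f x) = x := by simpa using congrFun hf x
      rw [hu, hx]⟩
  · exact Or.inr ⟨g y, hv, by
      have hy : g (g y) = y := by simpa using congrFun hg y
      rw [hu, hy]⟩

lemma adj_pr_sigma (hf' : ∀ x, f x ≠ x) (hg' : ∀ y, g y ≠ y) (d : DD A B C) :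
    (matchGraph f g).Adj (prF d) (prF (Sum.map f g d)) := by
  rcases d with u | v
  · refine matchGraph_adj.2 ⟨?_, Or.inl (Or.inl ⟨u, (prF_inl u), (prF_inl (f u))⟩)⟩
    rw [prF_inl, Sum.map_inl, prF_inl]
    exact fun h => hf' u (embAB_inj h).symm
  · refine matchGraph_adj.2 ⟨?_, Or.inl (Or.inr ⟨v, (prF_inr v), (prF_inr (g v))⟩)⟩
    rw [prF_inr, Sum.map_inr, prF_inr]
    exact fun h => hg' v (embBC_inj h).symm

lemma rel_step {u w : A ⊕ B ⊕ C} (h : baseRel f g u w) {d : DD A B C}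
    (hd : prF d = u) :
    w = prF (Sum.map f g d) ∨ w = prF (Sum.map f g (tauF d)) := by
  rcases h with ⟨x, hu, hw⟩ | ⟨y, hu, hw⟩
  · have : prF d = prF (inl x : DD A B C) := by rw [hd, hu, prF_inl]
    rcases prF_eq this with h' | h'
    · left; rw [h', Sum.map_inl, prF_inl, hw]
    · right
      have : tauF d = inl x := by rw [h', tauF_invol]
      rw [this, Sum.map_inl, prF_inl, hw]
  · have : prF d = prF (inr y : DD A B C) := by rw [hd, hu, prF_inr]
    rcases prF_eq this with h' | h'
    · left; rw [h', Sum.map_inr, prF_inr, hw]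
    · right
      have : tauF d = inr y := by rw [h', tauF_invol]
      rw [this, Sum.map_inr, prF_inr, hw]

lemma adj_step (hf : f ∘ f = id) (hg : g ∘ g = id) {u w : A ⊕ B ⊕ C}
    (h : (matchGraph f g).Adj u w) {d : DD A B C} (hd : prF d = u) :
    w = prF (Sum.map f g d) ∨ w = prF (Sum.map f g (tauF d)) := by
  rcases (matchGraph_adj.1 h).2 with h' | h'
  · exact rel_step h' hd
  · exact rel_step (baseRel_symm hf hg h') hd

lemma reach_closed {V : Type*} {G : SimpleGraph V} {S : Set V}
    (hS : ∀ u v, u ∈ S → G.Adj u v → v ∈ S) {u v : V}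
    (hr : G.Reachable u v) (hu : u ∈ S) : v ∈ S := by
  obtain ⟨w⟩ := hr
  induction w with
  | nil => exact hu
  | cons hadj _ ih => exact ih (hS _ _ hu hadj)

lemma reach_iter (hf' : ∀ x, f x ≠ x) (hg' : ∀ y, g y ≠ y) (n : ℕ) (d : DD A B C) :
    (matchGraph f g).Reachable (prF d) (prF ((stepF f g)^[n] d)) := by
  induction n with
  | zero => exact SimpleGraph.Reachable.refl _
  | succ n ih =>
    refine ih.trans ?_
    rw [Function.iterate_succ_apply']
    have h1 : prF ((stepF f g)^[n] d) = prF (tauF ((stepF f g)^[n] d)) :=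
      (prF_tauF _).symm
    rw [h1]
    exact (adj_pr_sigma hf' hg' (tauF ((stepF f g)^[n] d))).reachable

end Graph

section Key

open Function

variable {f : A ⊕ B → A ⊕ B} {g : B ⊕ C → B ⊕ C}

lemma sigma_fpf (hf' : ∀ x, f x ≠ x) (hg' : ∀ y, g y ≠ y) (d : DD A B C) :
    Sum.map f g d ≠ d := by
  rcases d with u | v
  · simpa using hf' u
  · simpa using hg' v

lemma key [Fintype A] [Fintype B] [Fintype C]
    (hf : f ∘ f = id) (hf' : ∀ x, f x ≠ x) (hg : g ∘ g = id) (hg' : ∀ y, g y ≠ y)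
    (x : A ⊕ C) :
    ∃! y : A ⊕ C, y ≠ x ∧ (matchGraph f g).Reachable (embAC x) (embAC y) := by
  classical
  set F : DD A B C → DD A B C := stepF f g with hFdef
  have hFinj : Function.Injective F := stepF_inj hf hg
  set z : DD A B C := iotaF x with hzdef
  have htz : tauF z = z := tauF_iotaF x
  have hσz : Sum.map f g z = F z := by
    show Sum.map f g z = Sum.map f g (tauF z); rw [htz]
  -- z is a periodic point
  have hper : ∃ n, 0 < n ∧ F^[n] z = z := by
    obtain ⟨i, j, hij, hEq⟩ :=
      Finite.exists_ne_map_eq_of_infinite (fun n : ℕ => F^[n] z)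
    rcases hij.lt_or_gt with h | h
    · refine ⟨j - i, by omega, ?_⟩
      have := hEq.symm
      rw [show j = i + (j - i) by omega, Function.iterate_add_apply] at this
      exact hFinj.iterate i this
    · refine ⟨i - j, by omega, ?_⟩
      have := hEq
      rw [show i = j + (i - j) by omega, Function.iterate_add_apply] at this
      exact hFinj.iterate j this
  obtain ⟨n₀, hn₀pos, hn₀⟩ := hper
  set r : ℕ := Function.minimalPeriod F z with hrdef
  have hr0 : 0 < r := IsPeriodicPt.minimalPeriod_pos hn₀pos hn₀
  have hrper : F^[r] z = z := Function.iterate_minimalPeriod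
  -- no even iterate equals F z
  have hfix : ∀ k, F^[2 * k] z ≠ F z := by
    intro k hk
    have h1 : F^[k] (Sum.map f g (F^[k] z)) = Sum.map f g z :=
      stepF_iter_sigma hf hg k z
    have h2 : F^[k] (F^[k] z) = F z := by
      rw [← Function.iterate_add_apply, ← two_mul]; exact hk
    rw [hσz, ← h2] at h1
    exact sigma_fpf hf' hg' (F^[k] z) (hFinj.iterate k h1)
  -- r is even
  obtain ⟨s, hs⟩ : ∃ s, r = s + s := by
    rcases Nat.even_or_odd r with ⟨s, hs⟩ | ⟨s, hs⟩
    · exact ⟨s, hs⟩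
    · exfalso
      apply hfix (s + 1)
      rw [show 2 * (s + 1) = 1 + r by omega, Function.iterate_add_apply,
        hrper, Function.iterate_one]
  have hs0 : 0 < s := by omega
  -- the other endpoint
  set e : DD A B C := F^[s] z with hedef
  have hFse : F^[s] e = z := by
    rw [hedef, ← Function.iterate_add_apply, ← hs]; exact hrper
  have hte : tauF e = e := by
    apply hFinj.iterate s
    rw [hFse]
    calc F^[s] (tauF (F^[s] z)) = tauF z := stepF_iter_tauF hf hg s z
    _ = z := htz
  obtain ⟨y, hy⟩ := tauF_fixed hte
  have hyne : y ≠ x := by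
    intro h
    have : F^[s] z = z := by rw [← hedef, hy, h, ← hzdef]
    have hle := IsPeriodicPt.minimalPeriod_le hs0 this
    omega
  have hreach : (matchGraph f g).Reachable (embAC x) (embAC y) := by
    rw [← prF_iotaF x, ← prF_iotaF y, ← hy, hedef]
    exact reach_iter hf' hg' s z
  refine ⟨y, ⟨hyne, hreach⟩, ?_⟩
  -- uniqueness
  rintro y' ⟨hy'ne, hy'reach⟩
  -- the orbit set is closed under adjacency
  set S : Set (A ⊕ B ⊕ C) := {v | ∃ n, v = prF (F^[n] z)} with hSdef
  have hSclosed : ∀ u v, u ∈ S → (matchGraph f g).Adj u v → v ∈ S := by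
    rintro u v ⟨n, hn⟩ hadj
    rcases adj_step hf hg hadj hn.symm with h | h
    · -- v = prF (σ (F^[n] z))
      set t : ℕ := r - n % r with htdef
      have hdvd : r ∣ n + t := by
        have h1 : n % r < r := Nat.mod_lt _ hr0
        have h2 : n % r + r * (n / r) = n := Nat.mod_add_div n r
        refine ⟨n / r + 1, ?_⟩
        have h3 : r * (n / r + 1) = r * (n / r) + r := by rw [Nat.mul_succ]
        omega
      have hnt : F^[n + t] z = z := IsPeriodicPt.trans_dvd
        (Function.isPeriodicPt_minimalPeriod F z) hdvd
      refine ⟨t + 1, ?_⟩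
      have hkey : F^[n] (F^[t + 1] z) = F^[n] (Sum.map f g (F^[n] z)) := by
        rw [stepF_iter_sigma hf hg n z, hσz,
          ← Function.iterate_add_apply]
        rw [show n + (t + 1) = 1 + (n + t) by omega, Function.iterate_add_apply,
          hnt, Function.iterate_one]
      rw [h, (hFinj.iterate n hkey).symm]
    · -- v = prF (σ (tauF (F^[n] z))) = prF (F^[n+1] z)
      exact ⟨n + 1, by rw [h, Function.iterate_succ_apply']; rfl⟩
  have hy'S : embAC y' ∈ S := by
    refine reach_closed hSclosed hy'reach ⟨0, ?_⟩
    exact (prF_iotaF x).symm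
  obtain ⟨n, hn⟩ := hy'S
  have hiy' : F^[n] z = iotaF y' := prF_eq_embAC hn.symm
  have h2n : F^[n + n] z = z := by
    rw [Function.iterate_add_apply]
    calc F^[n] (F^[n] z) = F^[n] (tauF (F^[n] z)) := by
          rw [hiy', tauF_iotaF]
    _ = tauF z := stepF_iter_tauF hf hg n z
    _ = z := htz
  have hrdvd : r ∣ n + n := IsPeriodicPt.minimalPeriod_dvd h2n
  have hn0 : n ≠ 0 := by
    intro h
    apply hy'ne
    apply iotaF_inj
    rw [← hiy', h, Function.iterate_zero_apply, hzdef]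
  have hsn : s ∣ n := by
    obtain ⟨c, hc⟩ := hrdvd
    have h3 : r * c = s * c + s * c := by rw [hs, add_mul]
    exact ⟨c, by omega⟩
  obtain ⟨q, hq⟩ := hsn
  have hrn : ¬ r ∣ n := by
    intro hdvd
    apply hy'ne
    apply iotaF_inj
    rw [← hiy',
      IsPeriodicPt.trans_dvd (Function.isPeriodicPt_minimalPeriod F z) hdvd,
      hzdef]
  have hqodd : q % 2 = 1 := by
    rcases Nat.even_or_odd q with ⟨p, hp⟩ | ⟨p, hp⟩
    · exact absurd ⟨p, by rw [hq, hp, hs]; ring⟩ hrn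
    · omega
  have : F^[n] z = e := by
    obtain ⟨p, hp⟩ : ∃ p, q = 2 * p + 1 := ⟨q / 2, by omega⟩
    have hnval : n = s + r * p := by rw [hq, hp, hs]; ring
    have hper' : F^[r * p] z = z :=
      IsPeriodicPt.trans_dvd (Function.isPeriodicPt_minimalPeriod F z) ⟨p, rfl⟩
    rw [hnval, Function.iterate_add_apply, hper']
  apply iotaF_inj
  rw [← hiy', this, hy]

end Key

/-- For every vertex `x` of `A ⊕ C` there is exactly one vertex `y ≠ x` of `A ⊕ C`
lying in the same connected component of `G` as `x`.  Consequently there is a unique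
fixed-point-free involution `f * g` of `A ⊕ C` such that every `x : A ⊕ C` lies in the
same connected component of `G` as `(f * g) x`. -/
theorem stmt4 [Fintype A] [Fintype B] [Fintype C]
    (f : A ⊕ B → A ⊕ B) (hf : f ∘ f = id) (hf' : ∀ x, f x ≠ x)
    (g : B ⊕ C → B ⊕ C) (hg : g ∘ g = id) (hg' : ∀ y, g y ≠ y) :
    (∀ x : A ⊕ C, ∃! y : A ⊕ C, y ≠ x ∧
        (matchGraph f g).Reachable (embAC x) (embAC y)) ∧
    ∃! m : A ⊕ C → A ⊕ C, (m ∘ m = id ∧ ∀ x, m x ≠ x) ∧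
        ∀ x : A ⊕ C, (matchGraph f g).Reachable (embAC x) (embAC (m x)) := by
  classical
  have H : ∀ x : A ⊕ C, ∃! y : A ⊕ C, y ≠ x ∧
      (matchGraph f g).Reachable (embAC x) (embAC y) :=
    fun x => key hf hf' hg hg' x
  refine ⟨H, ?_⟩
  set m : A ⊕ C → A ⊕ C := fun x => (H x).exists.choose with hm
  have hm1 : ∀ x, m x ≠ x ∧ (matchGraph f g).Reachable (embAC x) (embAC (m x)) :=
    fun x => (H x).exists.choose_spec
  have huniq : ∀ x y, y ≠ x →
      (matchGraph f g).Reachable (embAC x) (embAC y) → y = m x := by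
    intro x y h1 h2
    obtain ⟨w, _, hwu⟩ := H x
    rw [hwu y ⟨h1, h2⟩, ← hwu (m x) ⟨(hm1 x).1, (hm1 x).2⟩]
  have hmm : ∀ x, m (m x) = x := fun x =>
    (huniq (m x) x (Ne.symm (hm1 x).1) ((hm1 x).2.symm)).symm
  refine ⟨m, ⟨⟨funext fun x => hmm x, fun x => (hm1 x).1⟩, fun x => (hm1 x).2⟩, ?_⟩
  rintro m' ⟨⟨_, hm'fpf⟩, hm'reach⟩
  funext x
  exact huniq x (m' x) (hm'fpf x) (hm'reach x)
end

section
/- For each x : A ⊕ C there is a unique sequence v₀, v₁, …, v_r (with r ≥ 1) of pairwise distinct vertices of A ⊕ B ⊕ C such that v₀ is the image of x, consecutive vertices v_i and v_{i+1} are adjacent in G, the intermediate vertices v₁, …, v_{r-1} all lie in the image of B, and v_r lies in the image of A ⊕ C; moreover, v_r is the image of (f * g) x. -/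
open Sum

variable {A B C : Type*}

/-- `m` is the composite matching `f * g`: the (unique) fixed-point-free involution of
`A ⊕ C` such that `x` and `m x` always lie in the same connected component of `G`. -/
def IsComposite (f : A ⊕ B → A ⊕ B) (g : B ⊕ C → B ⊕ C)
    (m : A ⊕ C → A ⊕ C) : Prop :=
  m ∘ m = id ∧ (∀ x, m x ≠ x) ∧
    ∀ x : A ⊕ C, (matchGraph f g).Reachable (embAC x) (embAC (m x))

/-- `v = (v 0, v 1, …, v r)` is a sequence of pairwise distinct vertices of
`A ⊕ B ⊕ C` with `r ≥ 1`, starting at the image of `x`, consecutive vertices adjacent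
in `G`, all intermediate vertices in the image of `B`, and ending in the image of
`A ⊕ C`. -/
def IsPathSeq (f : A ⊕ B → A ⊕ B) (g : B ⊕ C → B ⊕ C) (x : A ⊕ C)
    (r : ℕ) (v : Fin (r + 1) → A ⊕ B ⊕ C) : Prop :=
  1 ≤ r ∧ Function.Injective v ∧ v 0 = embAC x ∧
    (∀ i : Fin r, (matchGraph f g).Adj (v i.castSucc) (v i.succ)) ∧
    (∀ i : Fin (r + 1), i ≠ 0 → i ≠ Fin.last r → ∃ b : B, v i = inr (inl b)) ∧
    ∃ y : A ⊕ C, v (Fin.last r) = embAC y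

section Aux
variable {f : A ⊕ B → A ⊕ B} {g : B ⊕ C → B ⊕ C}

lemma adj_iff {u v : A ⊕ B ⊕ C} :
    (matchGraph f g).Adj u v ↔ u ≠ v ∧
      (((∃ x : A ⊕ B, u = embAB x ∧ v = embAB (f x)) ∨
        (∃ y : B ⊕ C, u = embBC y ∧ v = embBC (g y))) ∨
       ((∃ x : A ⊕ B, v = embAB x ∧ u = embAB (f x)) ∨
        (∃ y : B ⊕ C, v = embBC y ∧ u = embBC (g y)))) := by
  rw [matchGraph, SimpleGraph.fromRel_adj]

lemma nbr_a (hf : f ∘ f = id) (a : A) {v : A ⊕ B ⊕ C}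
    (h : (matchGraph f g).Adj (inl a) v) : v = embAB (f (inl a)) := by
  have hff : ∀ x, f (f x) = x := fun x => congrFun hf x
  rw [adj_iff] at h
  rcases h with ⟨-, (⟨x, hx1, hx2⟩ | ⟨y, hy1, hy2⟩) | ⟨x, hx1, hx2⟩ | ⟨y, hy1, hy2⟩⟩
  · obtain rfl : x = inl a := by cases x <;> simp_all [embAB]
    exact hx2
  · exfalso; cases y <;> simp_all [embBC]
  · rcases hfx : f x with a' | b' <;> rw [hfx] at hx2
    · obtain rfl : a = a' := by simpa [embAB] using hx2
      rw [hx1]; congr 1; rw [← hfx, hff]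
    · exact absurd hx2 (by simp [embAB])
  · exfalso; cases hgy : g y <;> rw [hgy] at hy2 <;> simp [embBC] at hy2

lemma nbr_c (hg : g ∘ g = id) (c : C) {v : A ⊕ B ⊕ C}
    (h : (matchGraph f g).Adj (inr (inr c)) v) : v = embBC (g (inr c)) := by
  have hgg : ∀ x, g (g x) = x := fun x => congrFun hg x
  rw [adj_iff] at h
  rcases h with ⟨-, (⟨x, hx1, hx2⟩ | ⟨y, hy1, hy2⟩) | ⟨x, hx1, hx2⟩ | ⟨y, hy1, hy2⟩⟩
  · exfalso; cases x <;> simp_all [embAB]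
  · obtain rfl : y = inr c := by cases y <;> simp_all [embBC]
    exact hy2
  · exfalso; cases hfx : f x <;> rw [hfx] at hx2 <;> simp [embAB] at hx2
  · rcases hgy : g y with b' | c' <;> rw [hgy] at hy2
    · exact absurd hy2 (by simp [embBC])
    · obtain rfl : c = c' := by simpa [embBC] using hy2
      rw [hy1]; congr 1; rw [← hgy, hgg]

lemma nbr_b (hf : f ∘ f = id) (hg : g ∘ g = id) (b : B) {v : A ⊕ B ⊕ C}
    (h : (matchGraph f g).Adj (inr (inl b)) v) :
    v = embAB (f (inr b)) ∨ v = embBC (g (inl b)) := by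
  have hff : ∀ x, f (f x) = x := fun x => congrFun hf x
  have hgg : ∀ x, g (g x) = x := fun x => congrFun hg x
  rw [adj_iff] at h
  rcases h with ⟨-, (⟨x, hx1, hx2⟩ | ⟨y, hy1, hy2⟩) | ⟨x, hx1, hx2⟩ | ⟨y, hy1, hy2⟩⟩
  · left
    obtain rfl : x = inr b := by cases x <;> simp_all [embAB]
    exact hx2
  · right
    obtain rfl : y = inl b := by cases y <;> simp_all [embBC]
    exact hy2
  · left
    rcases hfx : f x with a' | b' <;> rw [hfx] at hx2
    · exact absurd hx2 (by simp [embAB])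
    · obtain rfl : b = b' := by simpa [embAB] using hx2
      rw [hx1]; congr 1; rw [← hfx, hff]
  · right
    rcases hgy : g y with b' | c' <;> rw [hgy] at hy2
    · obtain rfl : b = b' := by simpa [embBC] using hy2
      rw [hy1]; congr 1; rw [← hgy, hgg]
    · exact absurd hy2 (by simp [embBC])

/-- A vertex in the image of `embAC` has at most one neighbour. -/
lemma nbr_ac (hf : f ∘ f = id) (hg : g ∘ g = id) (x : A ⊕ C) {v w : A ⊕ B ⊕ C}
    (h1 : (matchGraph f g).Adj (embAC x) v) (h2 : (matchGraph f g).Adj (embAC x) w) :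
    v = w := by
  cases x with
  | inl a => rw [nbr_a hf a h1, nbr_a hf a h2]
  | inr c => rw [nbr_c hg c h1, nbr_c hg c h2]

/-- A vertex with two distinct neighbours is in the image of `B`. -/
lemma two_nbrs (hf : f ∘ f = id) (hg : g ∘ g = id) {u v w : A ⊕ B ⊕ C}
    (h1 : (matchGraph f g).Adj u v) (h2 : (matchGraph f g).Adj u w) (hne : v ≠ w) :
    ∃ b : B, u = inr (inl b) := by
  rcases u with a | b | c
  · exact absurd ((nbr_a hf a h1).trans (nbr_a hf a h2).symm) hne
  · exact ⟨b, rfl⟩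
  · exact absurd ((nbr_c hg c h1).trans (nbr_c hg c h2).symm) hne

/-- At a `B`-vertex: of three neighbours with two of them distinct from the
third, the first two coincide. -/
lemma nbr_b_uniq (hf : f ∘ f = id) (hg : g ∘ g = id) (b : B) {v w p : A ⊕ B ⊕ C}
    (h1 : (matchGraph f g).Adj (inr (inl b)) v)
    (h2 : (matchGraph f g).Adj (inr (inl b)) w)
    (h3 : (matchGraph f g).Adj (inr (inl b)) p)
    (hvp : v ≠ p) (hwp : w ≠ p) : v = w := by
  rcases nbr_b hf hg b h1 with hv | hv <;>
    rcases nbr_b hf hg b h2 with hw | hw <;>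
    rcases nbr_b hf hg b h3 with hp | hp <;> simp_all

end Aux

section WalkAux
variable {V : Type*} {G : SimpleGraph V}

lemma getVert_mem_support {u v : V} (p : G.Walk u v) (i : ℕ) :
    p.getVert i ∈ p.support := by
  induction p generalizing i with
  | nil => simp [SimpleGraph.Walk.getVert]
  | cons h q ih =>
      cases i with
      | zero => simp [SimpleGraph.Walk.getVert]
      | succ n => simp only [SimpleGraph.Walk.getVert, SimpleGraph.Walk.support_cons,
          List.mem_cons]; exact Or.inr (ih n)

lemma getVert_inj_of_isPath {u v : V} (p : G.Walk u v) (hp : p.IsPath) :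
    ∀ i j, i ≤ p.length → j ≤ p.length → p.getVert i = p.getVert j → i = j := by
  induction p with
  | nil => intro i j hi hj _; simp at hi hj; omega
  | cons h q ih =>
      rw [SimpleGraph.Walk.cons_isPath_iff] at hp
      intro i j hi hj hij
      cases i with
      | zero =>
          cases j with
          | zero => rfl
          | succ n =>
              exfalso
              apply hp.2
              rw [SimpleGraph.Walk.getVert_zero, SimpleGraph.Walk.getVert_cons_succ] at hij
              rw [hij]
              exact getVert_mem_support q n
      | succ n =>
          cases j with
          | zero =>
              exfalso
              apply hp.2
              rw [SimpleGraph.Walk.getVert_zero, SimpleGraph.Walk.getVert_cons_succ] at hij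
              rw [← hij]
              exact getVert_mem_support q n
          | succ k =>
              simp only [SimpleGraph.Walk.getVert_cons_succ] at hij
              simp only [SimpleGraph.Walk.length_cons, Nat.succ_le_succ_iff] at hi hj
              exact congrArg Nat.succ (ih hp.1 n k hi hj hij)

end WalkAux

section Main
variable {f : A ⊕ B → A ⊕ B} {g : B ⊕ C → B ⊕ C} {x : A ⊕ C}

lemma IsPathSeq.adj' {r : ℕ} {v : Fin (r+1) → A ⊕ B ⊕ C} (hv : IsPathSeq f g x r v)
    {n : ℕ} (h : n < r) :
    (matchGraph f g).Adj (v ⟨n, by omega⟩) (v ⟨n+1, by omega⟩) :=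
  hv.2.2.2.1 ⟨n, h⟩

lemma IsPathSeq.interior {r : ℕ} {v : Fin (r+1) → A ⊕ B ⊕ C} (hv : IsPathSeq f g x r v)
    {n : ℕ} (h0 : 0 < n) (hr : n < r) : ∃ b : B, v ⟨n, by omega⟩ = inr (inl b) :=
  hv.2.2.2.2.1 ⟨n, by omega⟩ (by simp [Fin.ext_iff]; omega)
    (by simp [Fin.ext_iff, Fin.last]; omega)

lemma pathseq_key (hf : f ∘ f = id) (hg : g ∘ g = id)
    {r r' : ℕ} {v : Fin (r+1) → A ⊕ B ⊕ C} {w : Fin (r'+1) → A ⊕ B ⊕ C}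
    (hv : IsPathSeq f g x r v) (hw : IsPathSeq f g x r' w) :
    ∀ n, (hn : n ≤ r) → (hn' : n ≤ r') → v ⟨n, by omega⟩ = w ⟨n, by omega⟩ := by
  intro n
  induction n using Nat.strong_induction_on with
  | _ n ih =>
    match n with
    | 0 =>
        intro _ _
        rw [Fin.mk_zero, Fin.mk_zero, hv.2.2.1, hw.2.2.1]
    | 1 =>
        intro h1 h1'
        have a1 := hv.adj' (show 0 < r by omega)
        have a2 := hw.adj' (show 0 < r' by omega)
        rw [Fin.mk_zero, hv.2.2.1] at a1
        rw [Fin.mk_zero, hw.2.2.1] at a2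
        exact nbr_ac hf hg x a1 a2
    | (k+2) =>
        intro h2 h2'
        have ih1 := ih (k+1) (by omega) (by omega) (by omega)
        have ih0 := ih k (by omega) (by omega) (by omega)
        obtain ⟨b, hb⟩ := hv.interior (Nat.succ_pos k) (show k+1 < r by omega)
        have A1 := hv.adj' (show k+1 < r by omega)
        have A2 := hw.adj' (show k+1 < r' by omega)
        rw [← ih1] at A2
        have A3 := (hv.adj' (show k < r by omega)).symm
        have hvp : v ⟨k+2, by omega⟩ ≠ v ⟨k, by omega⟩ := by
          intro h
          have := hv.2.1 h
          simp [Fin.ext_iff] at this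
        have hwp : w ⟨k+2, by omega⟩ ≠ v ⟨k, by omega⟩ := by
          rw [ih0]
          intro h
          have := hw.2.1 h
          simp [Fin.ext_iff] at this
        rw [hb] at A1 A2 A3
        exact nbr_b_uniq hf hg b A1 A2 A3 hvp hwp

lemma pathseq_len (hf : f ∘ f = id) (hg : g ∘ g = id)
    {r r' : ℕ} {v : Fin (r+1) → A ⊕ B ⊕ C} {w : Fin (r'+1) → A ⊕ B ⊕ C}
    (hv : IsPathSeq f g x r v) (hw : IsPathSeq f g x r' w) (hlt : r < r') : False := by
  have key := pathseq_key hf hg hv hw r le_rfl (le_of_lt hlt)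
  obtain ⟨y, hy⟩ := hv.2.2.2.2.2
  obtain ⟨b, hb⟩ := hw.interior (show 0 < r by have := hv.1; omega) hlt
  rw [show (⟨r, by omega⟩ : Fin (r+1)) = Fin.last r from rfl, hy, hb] at key
  cases y <;> simp [embAC] at key

lemma pathseq_unique (hf : f ∘ f = id) (hg : g ∘ g = id)
    {r r' : ℕ} {v : Fin (r+1) → A ⊕ B ⊕ C} {w : Fin (r'+1) → A ⊕ B ⊕ C}
    (hv : IsPathSeq f g x r v) (hw : IsPathSeq f g x r' w) :
    (⟨r, v⟩ : Σ r : ℕ, Fin (r+1) → A ⊕ B ⊕ C) = ⟨r', w⟩ := by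
  obtain rfl : r = r' := by
    rcases lt_trichotomy r r' with h | h | h
    · exact (pathseq_len hf hg hv hw h).elim
    · exact h
    · exact (pathseq_len hf hg hw hv h).elim
  have : v = w := by
    funext i
    have := pathseq_key hf hg hv hw i.val (by omega) (by omega)
    simpa using this
  rw [this]

end Main

section Exist
variable {f : A ⊕ B → A ⊕ B} {g : B ⊕ C → B ⊕ C}

lemma pathseq_exists (hf : f ∘ f = id) (hg : g ∘ g = id)
    {m : A ⊕ C → A ⊕ C} (hm : IsComposite f g m) (x : A ⊕ C) :
    ∃ (r : ℕ) (v : Fin (r+1) → A ⊕ B ⊕ C),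
      IsPathSeq f g x r v ∧ v (Fin.last r) = embAC (m x) := by
  classical
  obtain ⟨W⟩ := hm.2.2 x
  set q : (matchGraph f g).Walk (embAC x) (embAC (m x)) := (W.toPath : (matchGraph f g).Path _ _).1 with hq
  have hpath : q.IsPath := W.toPath.2
  have hlen : 1 ≤ q.length := by
    by_contra h
    have h0 : q.length = 0 := by omega
    have := SimpleGraph.Walk.eq_of_length_eq_zero h0
    exact hm.2.1 x (embAC_inj this.symm)
  refine ⟨q.length, fun i => q.getVert i.val, ⟨hlen, ?_, ?_, ?_, ?_, ⟨m x, ?_⟩⟩, ?_⟩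
  · intro i j h
    exact Fin.ext (getVert_inj_of_isPath q hpath i.val j.val (by omega) (by omega) h)
  · simp
  · intro i
    simpa using q.adj_getVert_succ i.isLt
  · intro i h0 hlast
    have hi0 : 0 < i.val := by
      rcases Nat.eq_zero_or_pos i.val with h | h
      · exact absurd (Fin.ext h) h0
      · exact h
    have hir : i.val < q.length := by
      have := i.isLt
      rcases Nat.lt_or_ge i.val q.length with h | h
      · exact h
      · exact absurd (Fin.ext (show i.val = q.length by omega)) hlast
    obtain ⟨k, hk⟩ : ∃ k, i.val = k + 1 := ⟨i.val - 1, by omega⟩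
    have a1 := (q.adj_getVert_succ (show k < q.length by omega)).symm
    have a2 := q.adj_getVert_succ (show k + 1 < q.length by omega)
    have hne : q.getVert k ≠ q.getVert (k+2) := fun h => by
      have := getVert_inj_of_isPath q hpath k (k+2) (by omega) (by omega) h
      omega
    obtain ⟨b, hb⟩ := two_nbrs hf hg a1 a2 hne
    exact ⟨b, by show q.getVert i.val = _; rw [hk]; exact hb⟩
  · simp [SimpleGraph.Walk.getVert_length]
  · simp [SimpleGraph.Walk.getVert_length]

end Exist


/-- For each `x : A ⊕ C` there is a unique sequence `v₀, …, v_r` (`r ≥ 1`) of pairwise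
distinct vertices of `A ⊕ B ⊕ C` starting at the image of `x`, with consecutive
vertices adjacent in `G`, all intermediate vertices in the image of `B`, and the last
vertex in the image of `A ⊕ C`; moreover the last vertex is the image of `(f * g) x`. -/
theorem stmt6 [Fintype A] [Fintype B] [Fintype C]
    (f : A ⊕ B → A ⊕ B) (hf : f ∘ f = id) (hf' : ∀ x, f x ≠ x)
    (g : B ⊕ C → B ⊕ C) (hg : g ∘ g = id) (hg' : ∀ y, g y ≠ y)
    (m : A ⊕ C → A ⊕ C) (hm : IsComposite f g m) :
    ∀ x : A ⊕ C,
      (∃! p : Σ r : ℕ, Fin (r + 1) → A ⊕ B ⊕ C, IsPathSeq f g x p.1 p.2) ∧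
      ∀ (r : ℕ) (v : Fin (r + 1) → A ⊕ B ⊕ C), IsPathSeq f g x r v →
        v (Fin.last r) = embAC (m x) := by
  intro x
  obtain ⟨r0, v0, h0, hend⟩ := pathseq_exists hf hg hm x
  constructor
  · exact ⟨⟨r0, v0⟩, h0, fun q hq => pathseq_unique hf hg hq h0⟩
  · intro r v hv
    have e := pathseq_unique hf hg hv h0
    injection e with h1 h2
    subst h1
    rw [eq_of_heq h2]
    exact hend
end

section
/- The number of elements a : A with (f * g)(inl a) a bottom vertex (i.e. of the form inr c with c : C) is at most the minimum of the number of a : A with f (inl a) of the form inr b (b : B) and the number of c : C with g (inr c) of the form inl b (b : B). In other words, the number of through strands of the composite f * g is at most the minimum of the numbers of through strands of f and of g. -/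
/-!
If `f` pairs two vertices `a, a'` of `A`, then `{a, a'}` is a whole connected component of the
graph, so `f * g` pairs `a` with a vertex of `A` as well; dually for `g` on `C`. Hence a through
strand `a — c` of `f * g` forces `f a ∈ B` and `g c ∈ B`, and since `f * g` is an involution its
through strands are counted equally from `A` and from `C`.
-/

open Sum

variable {A B C : Type*}

theorem SimpleGraph.Reachable.mem_of_adj_mem {V : Type*} {G : SimpleGraph V} {S : Set V}
    (hS : ∀ v ∈ S, ∀ w, G.Adj v w → w ∈ S) {u v : V} (h : G.Reachable u v) (hu : u ∈ S) :
    v ∈ S :=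
  h.mem_subgraphVerts (H := (⊤ : G.Subgraph).induce S)
    (fun v hv w hvw => ⟨hv, hS v hv w hvw, hvw⟩) hu

theorem embAB_eq_inl {x : A ⊕ B} {a : A} : embAB (C := C) x = inl a ↔ x = inl a := by
  cases x <;> simp [embAB]

theorem embBC_eq_inr_inr {y : B ⊕ C} {c : C} : embBC (A := A) y = inr (inr c) ↔ y = inr c := by
  cases y <;> simp [embBC]

theorem embBC_ne_inl (y : B ⊕ C) (a : A) : embBC y ≠ inl a := by
  cases y <;> simp [embBC]

theorem embAB_ne_inr_inr (x : A ⊕ B) (c : C) : embAB x ≠ inr (inr c) := by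
  cases x <;> simp [embAB]

section

variable {f : A ⊕ B → A ⊕ B} {g : B ⊕ C → B ⊕ C}

theorem matchGraph_adj_inl (hf : Function.Involutive f) {a : A} {v : A ⊕ B ⊕ C}
    (h : (matchGraph f g).Adj (inl a) v) : v = embAB (f (inl a)) := by
  obtain ⟨-, (⟨x, hx, rfl⟩ | ⟨y, hy, -⟩) | (⟨x, rfl, hx⟩ | ⟨y, -, hy⟩)⟩ := h
  · rw [embAB_eq_inl.mp hx.symm]
  · exact absurd hy.symm (embBC_ne_inl y a)
  · rw [← embAB_eq_inl.mp hx.symm, hf]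
  · exact absurd hy.symm (embBC_ne_inl (g y) a)

theorem matchGraph_adj_inr_inr (hg : Function.Involutive g) {c : C} {v : A ⊕ B ⊕ C}
    (h : (matchGraph f g).Adj (inr (inr c)) v) : v = embBC (g (inr c)) := by
  obtain ⟨-, (⟨x, hx, -⟩ | ⟨y, hy, rfl⟩) | (⟨x, -, hx⟩ | ⟨y, rfl, hy⟩)⟩ := h
  · exact absurd hx.symm (embAB_ne_inr_inr x c)
  · rw [embBC_eq_inr_inr.mp hy.symm]
  · exact absurd hx.symm (embAB_ne_inr_inr (f x) c)
  · rw [← embBC_eq_inr_inr.mp hy.symm, hg]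

variable {m : A ⊕ C → A ⊕ C}

theorem IsComposite.isLeft_apply_inl (hf : Function.Involutive f) (hm : IsComposite f g m)
    {a : A} (hfa : (f (inl a)).isLeft) : (m (inl a)).isLeft := by
  obtain ⟨a', hfa⟩ := Sum.isLeft_iff.mp hfa
  have hfa' : f (inl a') = inl a := by rw [← hfa, hf]
  let S : Set (A ⊕ B ⊕ C) := {inl a, inl a'}
  have hclosed : ∀ v ∈ S, ∀ w, (matchGraph f g).Adj v w → w ∈ S := by
    rintro v (rfl | rfl) w hvw <;> simp [S, matchGraph_adj_inl hf hvw, hfa, hfa', embAB]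
  have := (hm.2.2 (inl a)).mem_of_adj_mem hclosed (by simp [S, embAC])
  revert this
  cases m (inl a) <;> simp [S, embAC]

theorem IsComposite.isRight_apply_inr (hg : Function.Involutive g) (hm : IsComposite f g m)
    {c : C} (hgc : (g (inr c)).isRight) : (m (inr c)).isRight := by
  obtain ⟨c', hgc⟩ := Sum.isRight_iff.mp hgc
  have hgc' : g (inr c') = inr c := by rw [← hgc, hg]
  let S : Set (A ⊕ B ⊕ C) := {inr (inr c), inr (inr c')}
  have hclosed : ∀ v ∈ S, ∀ w, (matchGraph f g).Adj v w → w ∈ S := by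
    rintro v (rfl | rfl) w hvw <;> simp [S, matchGraph_adj_inr_inr hg hvw, hgc, hgc', embBC]
  have := (hm.2.2 (inr c)).mem_of_adj_mem hclosed (by simp [S, embAC])
  revert this
  cases m (inr c) <;> simp [S, embAC]

end

open Finset in
theorem Function.Involutive.card_filter_isRight_apply_inl [Fintype A] [Fintype C]
    {m : A ⊕ C → A ⊕ C} (hm : Function.Involutive m) :
    #{a | (m (inl a)).isRight} = #{c | (m (inr c)).isLeft} := by
  refine card_bij' (fun a ha => (m (inl a)).getRight (by simpa using ha))
    (fun c hc => (m (inr c)).getLeft (by simpa using hc)) ?_ ?_ ?_ ?_ <;>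
    simp [hm _]

theorem stmt7_general [Fintype A] [Fintype C]
    (f : A ⊕ B → A ⊕ B) (hf : f ∘ f = id)
    (g : B ⊕ C → B ⊕ C) (hg : g ∘ g = id)
    (m : A ⊕ C → A ⊕ C) (hm : IsComposite f g m) :
    (Finset.univ.filter fun a : A => (m (inl a)).isRight).card ≤
      min ((Finset.univ.filter fun a : A => (f (inl a)).isRight).card)
        ((Finset.univ.filter fun c : C => (g (inr c)).isLeft).card) := by
  replace hf : Function.Involutive f := congrFun hf
  replace hg : Function.Involutive g := congrFun hg
  have hm_inv : Function.Involutive m := congrFun hm.1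
  refine le_min (Finset.card_le_card fun a => ?_) ?_
  · simp only [Finset.mem_filter, Finset.mem_univ, true_and, ← Sum.not_isLeft]
    exact mt (hm.isLeft_apply_inl hf)
  · rw [hm_inv.card_filter_isRight_apply_inl]
    refine Finset.card_le_card fun c => ?_
    simp only [Finset.mem_filter, Finset.mem_univ, true_and, ← Sum.not_isRight]
    exact mt (hm.isRight_apply_inr hg)

/-- The number of through strands of the composite `f * g` is at most the minimum of
the numbers of through strands of `f` and of `g`. -/
theorem stmt7 [Fintype A] [Fintype B] [Fintype C]
    (f : A ⊕ B → A ⊕ B) (hf : f ∘ f = id) (hf' : ∀ x, f x ≠ x)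
    (g : B ⊕ C → B ⊕ C) (hg : g ∘ g = id) (hg' : ∀ y, g y ≠ y)
    (m : A ⊕ C → A ⊕ C) (hm : IsComposite f g m) :
    (Finset.univ.filter fun a : A => (m (inl a)).isRight).card ≤
      min ((Finset.univ.filter fun a : A => (f (inl a)).isRight).card)
        ((Finset.univ.filter fun c : C => (g (inr c)).isLeft).card) :=
  stmt7_general f hf g hg m hm
end

section
/- Let k and m be natural numbers and set n = k + 2m. The number of flat (n,k)-dangles, i.e. the number of involutions of Fin n with exactly k fixed points, equals n! / (k! · 2^m · m!). -/
/-!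
An involution with `k` fixed points on a set of size `k + 2m` is exactly a permutation of
cycle type `2^m`: all its cycles have length dividing `2`, and they cover the `2m` moved points.
The count is then the size of that conjugacy class of the symmetric group,
`n! / ((n - 2m)! · 2^m · m!)`.
-/

open Finset Nat

namespace Equiv.Perm

def involutionSubtypeEquiv {α : Type*} (p : (α → α) → Prop) :
    {f : α → α // f ∘ f = id ∧ p f} ≃ {σ : Perm α // σ ^ 2 = 1 ∧ p σ} where
  toFun f := ⟨⟨f, f, congrFun f.2.1, congrFun f.2.1⟩, Perm.ext (congrFun f.2.1), f.2.2⟩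
  invFun σ := ⟨σ, funext (Perm.ext_iff.1 σ.2.1), σ.2.2⟩
  left_inv _ := rfl
  right_inv _ := Subtype.ext (Equiv.ext fun _ => rfl)

variable {α : Type*} [Fintype α] [DecidableEq α]

theorem card_filter_apply_eq_self (σ : Perm α) :
    #{x | σ x = x} = Fintype.card α - σ.cycleType.sum := by
  rw [sum_cycleType, ← card_compl]
  congr 1
  ext x
  simp [mem_support]

theorem cycleType_eq_replicate_two_iff {σ : Perm α} {k m : ℕ}
    (hα : Fintype.card α = k + 2 * m) :
    σ.cycleType = Multiset.replicate m 2 ↔ σ ^ 2 = 1 ∧ #{x | σ x = x} = k := by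
  have : Fact (Nat.Prime 2) := ⟨Nat.prime_two⟩
  rw [pow_prime_eq_one_iff, card_filter_apply_eq_self, hα]
  constructor
  · intro h
    simp only [h, Multiset.mem_replicate, Multiset.sum_replicate, smul_eq_mul]
    exact ⟨fun _ hc => hc.2, by omega⟩
  · rintro ⟨h2, hk⟩
    have hle := σ.sum_cycleType_le
    rw [Multiset.eq_replicate.mpr ⟨rfl, h2⟩] at hk hle ⊢
    rw [Multiset.sum_replicate, smul_eq_mul] at hk hle
    congr 1
    omega

theorem card_cycleType_eq_replicate_two (m : ℕ) (hm : 2 * m ≤ Fintype.card α) :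
    #{σ : Perm α | σ.cycleType = Multiset.replicate m 2} =
      (Fintype.card α)! / ((Fintype.card α - 2 * m)! * 2 ^ m * m !) := by
  rw [card_of_cycleType, if_pos ⟨by simpa [mul_comm] using hm, fun a ha => by
    rw [Multiset.eq_of_mem_replicate ha]⟩]
  rcases Nat.eq_zero_or_pos m with rfl | hm0
  · simp
  · simp [Multiset.toFinset_replicate, hm0.ne', mul_comm m 2]

end Equiv.Perm

/-- The number of flat `(n, k)`-dangles, i.e. of involutions of `Fin n` with exactly
`k` fixed points, where `n = k + 2m`, equals `n! / (k! · 2^m · m!)`. -/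
theorem stmt13 (k m : ℕ) :
    Nat.card {a : Fin (k + 2 * m) → Fin (k + 2 * m) //
        a ∘ a = id ∧ (Finset.univ.filter fun x => a x = x).card = k} =
      Nat.factorial (k + 2 * m) / (Nat.factorial k * 2 ^ m * Nat.factorial m) := by
  have hcard : Fintype.card (Fin (k + 2 * m)) = k + 2 * m := Fintype.card_fin _
  rw [Nat.card_congr (Equiv.Perm.involutionSubtypeEquiv _), Nat.card_eq_fintype_card,
    Fintype.card_subtype]
  simp_rw [← Equiv.Perm.cycleType_eq_replicate_two_iff hcard]
  rw [Equiv.Perm.card_cycleType_eq_replicate_two m (by omega), hcard, Nat.add_sub_cancel]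
end
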